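/- Let ℂ : Sym₃ → Sym₃ be an elasticity tensor that is coercive with constant c > 0. Then for every Ā ∈ Sym₂ (identified with an element of Sym₃ with vanishing third row and column) one has C̄Ā·Ā = min over b ∈ ℝ³ of ℂ(Ā + b⊙e₃)·(Ā + b⊙e₃), and C̄Ā·Ā ≥ c|Ā|²; in particular the self-adjoint map C̄ : Sym₂ → Sym₂ is positive definite. -/

import Mathlib

/-!
With `L_j := ℂĀ·(e_j ⊙ e₃)`, the energy `b ↦ ℂ(Ā + b⊙e₃)·(Ā + b⊙e₃)` is the quadratic
`ℂĀ·Ā + 2 L·b + b·𝕔b`. Coercivity of `ℂ` on the matrices `b ⊙ e₃` makes `𝕔` positive definite,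
and completing the square shows that the minimum is `ℂĀ·Ā − L·𝕔⁻¹L`, which is the component
formula for `C̄Ā·Ā`. A planar `Ā` is Frobenius-orthogonal to every `b ⊙ e₃`, so at a minimiser
`c|Ā|² ≤ c|Ā + b⊙e₃|² ≤ C̄Ā·Ā`.
-/

open Matrix
open scoped BigOperators

noncomputable section

/-- The space of real 3×3 matrices; symmetric ones form `Sym₃`. -/
abbrev M3 : Type := Matrix (Fin 3) (Fin 3) ℝ

/-- The Frobenius pairing `A·B := tr (A*B)`. -/
def dot3 (A B : M3) : ℝ := (A * B).trace

/-- The standard basis vector `e i` of `ℝ³`. -/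
def bv (i : Fin 3) : Fin 3 → ℝ := Pi.single i 1

/-- The symmetrized tensor product `a ⊙ b := (1/2)(a⊗b + b⊗a)`. -/
def symOd (a b : Fin 3 → ℝ) : M3 := Matrix.of fun i j => (a i * b j + b i * a j) / 2

/-- `b ⊙ e₃`. -/
def od3 (b : Fin 3 → ℝ) : M3 := symOd b (bv 2)

/-- Components `ℂ_{ijkl} := ℂ(e_k⊙e_l)·(e_i⊙e_j)` of the elasticity tensor. -/
def Ccomp (C : M3 →ₗ[ℝ] M3) (i j k l : Fin 3) : ℝ :=
  dot3 (C (symOd (bv k) (bv l))) (symOd (bv i) (bv j))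

/-- The matrix `𝕔` with `𝕔_{ij} := ℂ_{i3j3}`. -/
def cmat (C : M3 →ₗ[ℝ] M3) : M3 := Matrix.of fun i j => Ccomp C i 2 j 2

/-- Components `C̄_{αβγδ} := ℂ_{αβγδ} − ℂ_{αβj3}(𝕔⁻¹)_{ji}ℂ_{i3γδ}` of the reduced tensor. -/
def cbar (C : M3 →ₗ[ℝ] M3) (α β γ δ : Fin 3) : ℝ :=
  Ccomp C α β γ δ
    - ∑ j : Fin 3, ∑ i : Fin 3, Ccomp C α β j 2 * (cmat C)⁻¹ j i * Ccomp C i 2 γ δ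

/-- The quadratic form `C̄Ā·Ā` (for planar `Ā` only the Greek indices contribute). -/
def qbar (C : M3 →ₗ[ℝ] M3) (A : M3) : ℝ :=
  ∑ α : Fin 3, ∑ β : Fin 3, ∑ γ : Fin 3, ∑ δ : Fin 3, cbar C α β γ δ * A γ δ * A α β

/-- `A` has vanishing third row and column (identification of `Sym₂` inside `Sym₃`). -/
def planar (A : M3) : Prop := ∀ i : Fin 3, A i 2 = 0 ∧ A 2 i = 0

section CompleteSquare

variable {n : Type*} [Fintype n] [DecidableEq n]

theorem Matrix.dotProduct_mulVec_add_two_mul_dotProduct {R : Type*} [CommRing R]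
    {M : Matrix n n R} (hM : M.IsSymm) (hdet : IsUnit M.det) (L b : n → R) :
    b ⬝ᵥ M *ᵥ b + 2 * (L ⬝ᵥ b)
      = (b + M⁻¹ *ᵥ L) ⬝ᵥ M *ᵥ (b + M⁻¹ *ᵥ L) - L ⬝ᵥ M⁻¹ *ᵥ L := by
  set v := M⁻¹ *ᵥ L
  have hMv : M *ᵥ v = L := by rw [mulVec_mulVec, mul_nonsing_inv M hdet, one_mulVec]
  have hvM : v ⬝ᵥ M *ᵥ b = L ⬝ᵥ b := by
    rw [dotProduct_mulVec, ← hM.eq, vecMul_transpose, hMv]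
  rw [mulVec_add, hMv, dotProduct_add, add_dotProduct, add_dotProduct, hvM,
    dotProduct_comm b L, dotProduct_comm v L]
  ring

theorem Matrix.PosDef.isLeast_quadratic {M : Matrix n n ℝ} (hM : M.PosDef) (a : ℝ)
    (L : n → ℝ) :
    IsLeast {x | ∃ b, x = a + 2 * (L ⬝ᵥ b) + b ⬝ᵥ M *ᵥ b} (a - L ⬝ᵥ M⁻¹ *ᵥ L) := by
  have hsq (b : n → ℝ) := Matrix.dotProduct_mulVec_add_two_mul_dotProduct
    (isHermitian_iff_isSymm.mp hM.isHermitian) ((isUnit_iff_isUnit_det M).mp hM.isUnit) L b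
  refine ⟨⟨-(M⁻¹ *ᵥ L), ?_⟩, ?_⟩
  · have := hsq (-(M⁻¹ *ᵥ L))
    simp only [neg_add_cancel, mulVec_zero, dotProduct_zero] at this
    linarith
  · rintro _ ⟨b, rfl⟩
    have := hM.posSemidef.dotProduct_mulVec_nonneg (b + M⁻¹ *ᵥ L)
    rw [star_trivial] at this
    linarith [hsq b]

end CompleteSquare

lemma dot3_eq_sum (A B : M3) : dot3 A B = ∑ i, ∑ j, A i j * B j i := by
  simp [dot3, Matrix.trace, Matrix.mul_apply]

lemma dot3_comm (A B : M3) : dot3 A B = dot3 B A := trace_mul_comm A B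

@[simp] lemma dot3_add_left (A B D : M3) : dot3 (A + B) D = dot3 A D + dot3 B D := by
  simp [dot3, add_mul]

@[simp] lemma dot3_add_right (A B D : M3) : dot3 A (B + D) = dot3 A B + dot3 A D := by
  simp [dot3, mul_add]

@[simp] lemma dot3_smul_left (r : ℝ) (A B : M3) : dot3 (r • A) B = r * dot3 A B := by
  simp [dot3]

@[simp] lemma dot3_smul_right (r : ℝ) (A B : M3) : dot3 A (r • B) = r * dot3 A B := by
  simp [dot3]

@[simp] lemma dot3_sum_left {ι : Type*} (s : Finset ι) (f : ι → M3) (A : M3) :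
    dot3 (∑ i ∈ s, f i) A = ∑ i ∈ s, dot3 (f i) A := by
  simp [dot3, Finset.sum_mul]

@[simp] lemma dot3_sum_right {ι : Type*} (s : Finset ι) (A : M3) (f : ι → M3) :
    dot3 A (∑ i ∈ s, f i) = ∑ i ∈ s, dot3 A (f i) := by
  simp [dot3, Finset.mul_sum]

lemma dot3_self_of_isSymm {A : M3} (hA : A.IsSymm) : dot3 A A = (A * Aᴴ).trace := by
  rw [dot3, conjTranspose_eq_transpose_of_trivial, hA.eq]

lemma dot3_self_nonneg {A : M3} (hA : A.IsSymm) : 0 ≤ dot3 A A := by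
  rw [dot3_self_of_isSymm hA]
  exact (posSemidef_self_mul_conjTranspose A).trace_nonneg

lemma dot3_self_pos {A : M3} (hA : A.IsSymm) (hA0 : A ≠ 0) : 0 < dot3 A A :=
  (dot3_self_nonneg hA).lt_of_ne' <| by
    rwa [dot3_self_of_isSymm hA, Ne, trace_mul_conjTranspose_self_eq_zero_iff]

lemma symOd_isSymm (a b : Fin 3 → ℝ) : (symOd a b).IsSymm := by
  ext i j
  simp only [symOd, transpose_apply, of_apply]
  ring

lemma od3_isSymm (b : Fin 3 → ℝ) : (od3 b).IsSymm := symOd_isSymm _ _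

lemma od3_ne_zero {b : Fin 3 → ℝ} (hb : b ≠ 0) : od3 b ≠ 0 := by
  contrapose! hb
  ext i
  have := congrFun₂ hb i 2
  fin_cases i <;> simpa [od3, symOd, bv] using this

lemma dot3_od3_eq_zero_of_planar {A : M3} (hA : planar A) (b : Fin 3 → ℝ) :
    dot3 A (od3 b) = 0 := by
  simp [dot3_eq_sum, od3, symOd, bv, Fin.sum_univ_three, Pi.single_apply,
    fun i => (hA i).1, fun i => (hA i).2]

lemma dot3_self_le_of_planar {A : M3} (hA : planar A) (b : Fin 3 → ℝ) :
    dot3 A A ≤ dot3 (A + od3 b) (A + od3 b) := by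
  simp only [dot3_add_left, dot3_add_right, dot3_comm (od3 b) A,
    dot3_od3_eq_zero_of_planar hA]
  linarith [dot3_self_nonneg (od3_isSymm b)]

lemma eq_sum_smul_symOd_of_isSymm {A : M3} (hA : A.IsSymm) :
    A = ∑ k, ∑ l, A k l • symOd (bv k) (bv l) := by
  ext i j
  have hji : A j i = A i j := congrFun₂ hA i j
  simp only [symOd, bv, Pi.single_apply, mul_ite, mul_one, mul_zero, add_div, ite_div, one_div,
    zero_div, smul_of, Matrix.sum_apply, of_apply, Pi.smul_apply, smul_eq_mul, mul_add,
    Finset.sum_add_distrib, Finset.sum_ite_eq, Finset.mem_univ, ↓reduceIte,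
    Finset.sum_ite_irrel, Finset.sum_const_zero, hji]
  ring

lemma od3_eq_sum (b : Fin 3 → ℝ) : od3 b = ∑ i, b i • symOd (bv i) (bv 2) := by
  ext i j
  simp only [od3, symOd, bv, Pi.single_apply, mul_ite, mul_one, mul_zero, ite_mul, one_mul,
    zero_mul, add_div, ite_div, zero_div, of_apply, one_div, smul_of, Matrix.sum_apply,
    Pi.smul_apply, smul_eq_mul, mul_add, Finset.sum_add_distrib, Finset.sum_ite_irrel,
    Finset.sum_ite_eq, Finset.mem_univ, ↓reduceIte, Finset.sum_const_zero]
  simp only [div_eq_mul_inv]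

section Elasticity

variable (C : M3 →ₗ[ℝ] M3)

def IsSelfAdjointOnSym : Prop :=
  ∀ A B : M3, A.IsSymm → B.IsSymm → dot3 (C A) B = dot3 A (C B)

def couplingVec (A : M3) : Fin 3 → ℝ := fun j => dot3 (C A) (symOd (bv j) (bv 2))

variable {C}

lemma Ccomp_swap (hCsa : IsSelfAdjointOnSym C)
    (i j k l : Fin 3) : Ccomp C i j k l = Ccomp C k l i j := by
  rw [Ccomp, Ccomp, hCsa _ _ (symOd_isSymm _ _) (symOd_isSymm _ _), dot3_comm]

lemma cmat_isSymm (hCsa : IsSelfAdjointOnSym C) :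
    (cmat C).IsSymm := by
  ext i j
  exact Ccomp_swap hCsa j 2 i 2

lemma dot3_apply_eq_sum_Ccomp {A B : M3} (hA : A.IsSymm) (hB : B.IsSymm) :
    dot3 (C A) B = ∑ α, ∑ β, ∑ γ, ∑ δ, Ccomp C α β γ δ * A γ δ * B α β := by
  conv_lhs => rw [eq_sum_smul_symOd_of_isSymm hA, eq_sum_smul_symOd_of_isSymm hB]
  simp only [map_sum, map_smul, dot3_sum_left, dot3_sum_right, dot3_smul_left,
    dot3_smul_right, Finset.mul_sum, Ccomp]
  congr! 4
  ring

lemma dot3_apply_od3 (A : M3) (b : Fin 3 → ℝ) : dot3 (C A) (od3 b) = couplingVec C A ⬝ᵥ b := by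
  simp [od3_eq_sum, dotProduct, couplingVec, mul_comm]

lemma dot3_apply_od3_od3 (b : Fin 3 → ℝ) : dot3 (C (od3 b)) (od3 b) = b ⬝ᵥ cmat C *ᵥ b := by
  conv_lhs => rw [od3_eq_sum b]
  simp [dotProduct, mulVec, cmat, Ccomp, Finset.mul_sum, mul_comm]

lemma cmat_posDef {c : ℝ} (hc : 0 < c) (hCsa : IsSelfAdjointOnSym C)
    (hCcoer : ∀ A : M3, A.IsSymm → c * dot3 A A ≤ dot3 (C A) A) : (cmat C).PosDef := by
  refine posDef_iff_dotProduct_mulVec.mpr ⟨isHermitian_iff_isSymm.mpr (cmat_isSymm hCsa),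
    fun b hb => ?_⟩
  rw [star_trivial, ← dot3_apply_od3_od3]
  exact (mul_pos hc (dot3_self_pos (od3_isSymm b) (od3_ne_zero hb))).trans_le
    (hCcoer _ (od3_isSymm b))

lemma dot3_apply_add_od3
    (hCsa : IsSelfAdjointOnSym C) {A : M3} (hA : A.IsSymm) (b : Fin 3 → ℝ) :
    dot3 (C (A + od3 b)) (A + od3 b)
      = dot3 (C A) A + 2 * (couplingVec C A ⬝ᵥ b) + b ⬝ᵥ cmat C *ᵥ b := by
  rw [map_add, dot3_add_left, dot3_add_right, dot3_add_right, hCsa _ _ (od3_isSymm b) hA,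
    dot3_comm (od3 b), dot3_apply_od3, dot3_apply_od3_od3]
  ring

lemma couplingVec_eq_sum {A : M3} (hA : A.IsSymm) (j : Fin 3) :
    couplingVec C A j = ∑ γ, ∑ δ, Ccomp C j 2 γ δ * A γ δ := by
  conv_lhs => rw [couplingVec, eq_sum_smul_symOd_of_isSymm hA]
  simp only [map_sum, map_smul, dot3_sum_left, dot3_smul_left, Ccomp, mul_comm]

lemma qbar_eq (hCsa : IsSelfAdjointOnSym C)
    {A : M3} (hA : A.IsSymm) :
    qbar C A = dot3 (C A) A - couplingVec C A ⬝ᵥ (cmat C)⁻¹ *ᵥ couplingVec C A := by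
  rw [dot3_apply_eq_sum_Ccomp hA hA, qbar]
  simp only [cbar, sub_mul, Finset.sum_sub_distrib]
  congr 1
  simp only [dotProduct, mulVec, couplingVec_eq_sum hA]
  -- swap before expanding the sums: once the indices are literals `Ccomp_swap` loops
  simp only [Ccomp_swap hCsa _ 2 _ _]
  simp only [Fin.sum_univ_three]
  ring

end Elasticity

theorem cbar_quadForm_isLeast_and_posDef_general
    (C : M3 →ₗ[ℝ] M3) (c : ℝ) (hc : 0 < c)
    (hCsa : ∀ A B : M3, A.IsSymm → B.IsSymm → dot3 (C A) B = dot3 A (C B))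
    (hCcoer : ∀ A : M3, A.IsSymm → c * dot3 A A ≤ dot3 (C A) A)
    (Ab : M3) (hAs : Ab.IsSymm) (hAp : planar Ab) :
    IsLeast {x : ℝ | ∃ b : Fin 3 → ℝ, x = dot3 (C (Ab + od3 b)) (Ab + od3 b)} (qbar C Ab)
    ∧ c * dot3 Ab Ab ≤ qbar C Ab
    ∧ (Ab ≠ 0 → 0 < qbar C Ab) := by
  have hmin : IsLeast {x : ℝ | ∃ b : Fin 3 → ℝ, x = dot3 (C (Ab + od3 b)) (Ab + od3 b)}
      (qbar C Ab) := by
    simp_rw [dot3_apply_add_od3 hCsa hAs, qbar_eq hCsa hAs]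
    exact (cmat_posDef hc hCsa hCcoer).isLeast_quadratic _ _
  have hcoer : c * dot3 Ab Ab ≤ qbar C Ab := by
    obtain ⟨b, hb⟩ := hmin.1
    calc c * dot3 Ab Ab ≤ c * dot3 (Ab + od3 b) (Ab + od3 b) :=
          mul_le_mul_of_nonneg_left (dot3_self_le_of_planar hAp b) hc.le
      _ ≤ dot3 (C (Ab + od3 b)) (Ab + od3 b) := hCcoer _ (hAs.add (od3_isSymm b))
      _ = qbar C Ab := hb.symm
  exact ⟨hmin, hcoer, fun hAb => (mul_pos hc (dot3_self_pos hAs hAb)).trans_le hcoer⟩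

/-- Let `ℂ` be an elasticity tensor, coercive with constant `c > 0`.  Then
for every `Ā ∈ Sym₂` one has `C̄Ā·Ā = min_{b ∈ ℝ³} ℂ(Ā + b⊙e₃)·(Ā + b⊙e₃)`, and
`C̄Ā·Ā ≥ c|Ā|²`; in particular the self-adjoint map `C̄ : Sym₂ → Sym₂` is positive
definite. -/
theorem cbar_quadForm_isLeast_and_posDef
    (C : M3 →ₗ[ℝ] M3) (c : ℝ) (hc : 0 < c)
    (hCsymm : ∀ A : M3, A.IsSymm → (C A).IsSymm)
    (hCsa : ∀ A B : M3, A.IsSymm → B.IsSymm → dot3 (C A) B = dot3 A (C B))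
    (hCcoer : ∀ A : M3, A.IsSymm → c * dot3 A A ≤ dot3 (C A) A)
    (Ab : M3) (hAs : Ab.IsSymm) (hAp : planar Ab) :
    IsLeast {x : ℝ | ∃ b : Fin 3 → ℝ, x = dot3 (C (Ab + od3 b)) (Ab + od3 b)} (qbar C Ab)
    ∧ c * dot3 Ab Ab ≤ qbar C Ab
    ∧ (Ab ≠ 0 → 0 < qbar C Ab) :=
  cbar_quadForm_isLeast_and_posDef_general C c hc hCsa hCcoer Ab hAs hAp
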